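/- arXiv:2502.10165 — 6 statements merged into one kernel-verified Lean document; each statement's English description precedes it below -/
import Mathlib

section
/- Let X be a Banach lattice and x₀ ∈ X a positive atom whose generated ideal is a projection band with coordinate functional λ. Then for any equivalent lattice norm on X, λ attains its norm at x₀/‖x₀‖. -/
/-- A real-valued lattice homomorphism on a Banach lattice. -/
def IsLatticeHomFunctional {X : Type*} [NormedAddCommGroup X] [Lattice X] [IsOrderedAddMonoid X] [HasSolidNorm X] [NormedSpace ℝ X]
    (f : X →L[ℝ] ℝ) : Prop :=
  ∀ x y : X, f (x ⊔ y) = max (f x) (f y)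

/-- An atom of a Banach lattice: a positive element generating a one-dimensional ideal. -/
def IsLatAtom {X : Type*} [NormedAddCommGroup X] [Lattice X] [IsOrderedAddMonoid X] [HasSolidNorm X] [NormedSpace ℝ X] (x₀ : X) : Prop :=
  0 < x₀ ∧ ∀ y : X, 0 ≤ y → y ≤ x₀ → ∃ r : ℝ, y = r • x₀

/-- `l` is the coordinate functional of the atom `x₀`: the band projection onto the span of
`x₀` is `x ↦ l x • x₀`, i.e. `x - l x • x₀` is disjoint from `x₀` for every `x`. -/
def IsCoordinateFunctional {X : Type*} [NormedAddCommGroup X] [Lattice X] [IsOrderedAddMonoid X] [HasSolidNorm X] [NormedSpace ℝ X]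
    (l : X →L[ℝ] ℝ) (x₀ : X) : Prop :=
  ∀ x : X, |x - l x • x₀| ⊓ x₀ = 0

/-- An equivalent lattice norm on `X`. -/
structure LatticeNorm (X : Type*) [NormedAddCommGroup X] [Lattice X] [NormedSpace ℝ X] where
  n : X → ℝ
  add_le : ∀ x y : X, n (x + y) ≤ n x + n y
  smul_eq : ∀ (r : ℝ) (x : X), n (r • x) = |r| * n x
  eq_zero_of : ∀ x : X, n x = 0 → x = 0
  mono : ∀ x y : X, |x| ≤ |y| → n x ≤ n y
  lower : ∃ c : ℝ, 0 < c ∧ ∀ x : X, c * ‖x‖ ≤ n x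
  upper : ∃ C : ℝ, 0 < C ∧ ∀ x : X, n x ≤ C * ‖x‖

/-!
Splitting `y = λ(y) x₀ + (y - λ(y) x₀)` into two disjoint parts gives `|λ(y) x₀| ≤ |y|`, so any
lattice norm satisfies `|λ(y)| ‖x₀‖ ≤ ‖y‖`; and `λ(x₀) = 1` since `(1 - λ(x₀)) x₀` is disjoint
from `x₀`. The lattice arithmetic needs real scalars to act monotonically, which holds in every
normed lattice: in a lattice-ordered group `0 ≤ n • y` forces `0 ≤ y`, and the positive cone is
closed.
-/

section LatticeOrderedGroup

variable {α : Type*} [AddCommGroup α] [Lattice α] [IsOrderedAddMonoid α] {a b c : α}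

lemma inf_add_le_inf_add_inf (ha : 0 ≤ a) (hb : 0 ≤ b) (hc : 0 ≤ c) :
    a ⊓ (b + c) ≤ a ⊓ b + a ⊓ c := by
  rw [← sub_le_iff_le_add]
  refine le_inf ?_ ?_
  · exact (sub_le_sub inf_le_left (le_inf ha hc)).trans_eq (sub_zero a)
  · rw [sub_le_iff_le_add, add_comm b (a ⊓ c), ← sub_le_iff_le_add]
    refine le_inf ((sub_le_sub inf_le_left hb).trans_eq (sub_zero a)) ?_
    exact (sub_le_sub_right inf_le_right b).trans_eq (add_sub_cancel_left b c)

lemma inf_nsmul_eq_zero (ha : 0 ≤ a) (hb : 0 ≤ b) (hab : a ⊓ b = 0) (n : ℕ) :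
    a ⊓ n • b = 0 := by
  induction n with
  | zero => simpa using ha
  | succ k ih =>
    refine le_antisymm ?_ (le_inf ha (nsmul_nonneg hb _))
    calc a ⊓ (k + 1) • b ≤ a ⊓ k • b + a ⊓ b := by
          rw [succ_nsmul]; exact inf_add_le_inf_add_inf ha (nsmul_nonneg hb k) hb
      _ = 0 := by rw [ih, hab, add_zero]

lemma nonneg_of_nsmul_nonneg {n : ℕ} (hn : n ≠ 0) (h : 0 ≤ n • a) : 0 ≤ a := by
  have hdisj : a⁻ ⊓ n • a⁺ = 0 :=
    inf_nsmul_eq_zero (negPart_nonneg a) (posPart_nonneg a)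
      (by rw [inf_comm]; exact posPart_inf_negPart_eq_zero a) n
  have hle : a⁻ ≤ n • a⁺ := calc
    a⁻ ≤ n • a⁻ := le_self_nsmul (negPart_nonneg a) hn
    _ ≤ n • a⁺ := by rwa [← sub_nonneg, ← nsmul_sub, posPart_sub_negPart]
  rw [← negPart_eq_zero, ← hdisj]
  exact (inf_eq_left.2 hle).symm

lemma abs_le_abs_add_of_abs_inf_abs_eq_zero (h : |a| ⊓ |b| = 0) : |b| ≤ |a + b| := calc
  |b| = |b| ⊓ |(a + b) + -a| := by rw [add_neg_cancel_comm, inf_idem]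
  _ ≤ |b| ⊓ (|a + b| + |a|) := inf_le_inf_left _ ((abs_add_le _ _).trans_eq (by rw [abs_neg]))
  _ ≤ |b| ⊓ |a + b| + |b| ⊓ |a| :=
    inf_add_le_inf_add_inf (abs_nonneg b) (abs_nonneg _) (abs_nonneg a)
  _ ≤ |a + b| := by rw [inf_comm |b| |a|, h, add_zero]; exact inf_le_right

lemma ratCast_smul_nonneg {𝕜 : Type*} [DivisionRing 𝕜] [CharZero 𝕜] [Module 𝕜 α] {q : ℚ}
    (hq : 0 ≤ q) (ha : 0 ≤ a) : 0 ≤ (q : 𝕜) • a := by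
  refine nonneg_of_nsmul_nonneg q.den_ne_zero ?_
  have hnum : q.den • ((q : 𝕜) • a) = q.num • a := by
    rw [← Nat.cast_smul_eq_nsmul 𝕜, smul_smul, ← Int.cast_smul_eq_zsmul 𝕜]
    congr 1
    exact_mod_cast Rat.den_mul_eq_num q
  rw [hnum]
  exact zsmul_nonneg ha (Rat.num_nonneg.2 hq)

end LatticeOrderedGroup

section NormedLattice

variable {X : Type*} [NormedAddCommGroup X] [Lattice X] [IsOrderedAddMonoid X] [HasSolidNorm X]
  [NormedSpace ℝ X]

instance HasSolidNorm.toPosSMulMono : PosSMulMono ℝ X := by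
  refine PosSMulMono.of_smul_nonneg fun r hr x hx => ?_
  rw [← max_eq_left hr]
  refine Rat.denseRange_cast.induction_on r (p := fun s : ℝ => 0 ≤ max s 0 • x)
    (isClosed_le continuous_const (by fun_prop)) fun q => ?_
  simpa using ratCast_smul_nonneg (𝕜 := ℝ) (le_max_right q 0) hx

end NormedLattice

section OrderedModule

variable {𝕜 α : Type*} [Field 𝕜] [LinearOrder 𝕜] [IsStrictOrderedRing 𝕜] [AddCommGroup α]
  [Lattice α] [IsOrderedAddMonoid α] [Module 𝕜 α] [PosSMulMono 𝕜 α] {a b : α}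

lemma abs_smul_of_nonneg (r : 𝕜) (hb : 0 ≤ b) : |r • b| = |r| • b := by
  rcases le_total 0 r with hr | hr
  · rw [abs_of_nonneg (smul_nonneg hr hb), abs_of_nonneg hr]
  · rw [abs_of_nonpos (smul_nonpos_of_nonpos_of_nonneg hr hb), abs_of_nonpos hr, neg_smul]

lemma inf_smul_eq_zero [FloorSemiring 𝕜] (ha : 0 ≤ a) (hb : 0 ≤ b) (hab : a ⊓ b = 0) {r : 𝕜}
    (hr : 0 ≤ r) : a ⊓ r • b = 0 := by
  refine le_antisymm ?_ (le_inf ha (smul_nonneg hr hb))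
  calc a ⊓ r • b ≤ a ⊓ (⌈r⌉₊ : 𝕜) • b :=
        inf_le_inf_left a (smul_le_smul_of_nonneg_right (Nat.le_ceil r) hb)
    _ = 0 := by rw [Nat.cast_smul_eq_nsmul, inf_nsmul_eq_zero ha hb hab]

end OrderedModule

namespace IsCoordinateFunctional

variable {X : Type*} [NormedAddCommGroup X] [Lattice X] [IsOrderedAddMonoid X] [HasSolidNorm X]
  [NormedSpace ℝ X] {l : X →L[ℝ] ℝ} {x₀ : X}

lemma abs_smul_le_abs (hl : IsCoordinateFunctional l x₀) (hx₀ : 0 ≤ x₀) (y : X) :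
    |l y • x₀| ≤ |y| := by
  refine (abs_le_abs_add_of_abs_inf_abs_eq_zero ?_).trans_eq (congrArg _ (sub_add_cancel y _))
  rw [abs_smul_of_nonneg _ hx₀]
  exact inf_smul_eq_zero (abs_nonneg _) hx₀ (hl y) (abs_nonneg _)

lemma apply_self (hl : IsCoordinateFunctional l x₀) (hx₀ : 0 < x₀) : l x₀ = 1 := by
  have hdisj : x₀ ⊓ |1 - l x₀| • x₀ = 0 := by
    rw [inf_comm, ← abs_smul_of_nonneg _ hx₀.le, sub_smul, one_smul]
    exact hl x₀
  by_contra hne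
  have ht : 0 < |1 - l x₀| := abs_pos.2 (sub_ne_zero.2 (Ne.symm hne))
  -- rescaling by `|1 - l x₀|⁻¹` would make `x₀` disjoint from itself
  have hself : x₀ ⊓ x₀ = 0 := by
    simpa [smul_smul, inv_mul_cancel₀ ht.ne'] using
      inf_smul_eq_zero hx₀.le (smul_nonneg ht.le hx₀.le) hdisj (inv_nonneg.2 ht.le)
  exact hx₀.ne' (by rwa [inf_idem] at hself)

end IsCoordinateFunctional

namespace LatticeNorm

variable {X : Type*} [NormedAddCommGroup X] [Lattice X] [NormedSpace ℝ X] (N : LatticeNorm X)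

lemma pos_of_ne_zero {x : X} (hx : x ≠ 0) : 0 < N.n x := by
  have hzero : N.n 0 = 0 := by simpa using N.smul_eq 0 0
  have hneg : N.n (-x) = N.n x := by simpa using N.smul_eq (-1) x
  have hnonneg : 0 ≤ N.n x := by
    have h := N.add_le x (-x)
    rw [add_neg_cancel, hzero, hneg] at h
    linarith
  exact hnonneg.lt_of_ne fun h => hx (N.eq_zero_of x h.symm)

end LatticeNorm

theorem coordinate_functional_attains_norm_for_every_lattice_renorming_general
    {X : Type*} [NormedAddCommGroup X] [Lattice X] [IsOrderedAddMonoid X] [HasSolidNorm X] [NormedSpace ℝ X]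
    (x₀ : X) (hx₀ : IsLatAtom x₀) (l : X →L[ℝ] ℝ) (hl : IsCoordinateFunctional l x₀)
    (N : LatticeNorm X) :
    N.n ((N.n x₀)⁻¹ • x₀) = 1 ∧
      ∀ y : X, N.n y ≤ 1 → |l y| ≤ l ((N.n x₀)⁻¹ • x₀) := by
  have hs : 0 < N.n x₀ := N.pos_of_ne_zero hx₀.1.ne'
  refine ⟨by rw [N.smul_eq, abs_of_pos (inv_pos.2 hs), inv_mul_cancel₀ hs.ne'], fun y hy => ?_⟩
  rw [map_smul, hl.apply_self hx₀.1, smul_eq_mul, mul_one, ← one_div, le_div_iff₀ hs]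
  calc |l y| * N.n x₀ = N.n (l y • x₀) := (N.smul_eq _ _).symm
    _ ≤ N.n y := N.mono _ _ (hl.abs_smul_le_abs hx₀.1.le y)
    _ ≤ 1 := hy

/-- the coordinate functional of an atom attains its norm at `x₀ / ‖x₀‖` for
any equivalent lattice norm. -/
theorem coordinate_functional_attains_norm_for_every_lattice_renorming
    {X : Type*} [NormedAddCommGroup X] [Lattice X] [IsOrderedAddMonoid X] [HasSolidNorm X] [NormedSpace ℝ X] [CompleteSpace X]
    (x₀ : X) (hx₀ : IsLatAtom x₀) (l : X →L[ℝ] ℝ) (hl : IsCoordinateFunctional l x₀)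
    (N : LatticeNorm X) :
    N.n ((N.n x₀)⁻¹ • x₀) = 1 ∧
      ∀ y : X, N.n y ≤ 1 → |l y| ≤ l ((N.n x₀)⁻¹ • x₀) :=
  coordinate_functional_attains_norm_for_every_lattice_renorming_general x₀ hx₀ l hl N
end

section
/- Let x* be a nonzero lattice homomorphism on a vector lattice X. If the kernel of x* is not order dense in X, then there exists an atom x₀ ∈ X such that x* is a positive multiple of the coordinate functional of x₀. -/
section VectorLattice

variable {X : Type*} [Lattice X] [AddCommGroup X]
  [CovariantClass X X (· + ·) (· ≤ ·)] [Module ℝ X] [PosSMulMono ℝ X]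

/-- An atom of a vector lattice. -/
def IsVLAtom (x₀ : X) : Prop :=
  0 < x₀ ∧ ∀ y : X, 0 ≤ y → y ≤ x₀ → ∃ r : ℝ, y = r • x₀

/-- `l` is the coordinate functional of the atom `x₀`: the band projection onto the span of
`x₀` is `x ↦ l x • x₀`, i.e. `x - l x • x₀` is disjoint from `x₀` for every `x`. -/
def IsVLCoordinateFunctional (l : X →ₗ[ℝ] ℝ) (x₀ : X) : Prop :=
  ∀ x : X, |x - l x • x₀| ⊓ x₀ = 0

/-- A real-valued lattice homomorphism on a vector lattice. -/
def IsVLLatticeHom (f : X →ₗ[ℝ] ℝ) : Prop :=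
  ∀ x y : X, f (x ⊔ y) = max (f x) (f y)

end VectorLattice

/-- if the kernel of a nonzero lattice homomorphism on a vector lattice is not
order dense, then the homomorphism is a positive multiple of the coordinate functional of
an atom. -/
theorem latticeHom_ker_not_orderDense_imp_coordinate_functional
    {X : Type*} [Lattice X] [AddCommGroup X]
    [CovariantClass X X (· + ·) (· ≤ ·)] [Module ℝ X] [PosSMulMono ℝ X]
    (f : X →ₗ[ℝ] ℝ) (hf : IsVLLatticeHom f) (hf0 : f ≠ 0)
    (hker : ¬ (∀ x : X, 0 < x → ∃ y : X, f y = 0 ∧ 0 < y ∧ y ≤ x)) :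
    ∃ (x₀ : X) (l : X →ₗ[ℝ] ℝ) (c : ℝ),
      IsVLAtom x₀ ∧ IsVLCoordinateFunctional l x₀ ∧ 0 < c ∧ f = c • l := by
  push_neg at hker
  obtain ⟨x, hx, hxprop⟩ := hker
  -- f is positive
  have hpos : ∀ y : X, 0 ≤ y → 0 ≤ f y := by
    intro y hy
    have h := hf y 0
    rw [sup_eq_left.mpr hy, map_zero] at h
    rw [h]; exact le_max_right _ _
  -- f preserves |·|
  have habs : ∀ u : X, f |u| = |f u| := by
    intro u
    have h1 : |u| = u ⊔ -u := rfl
    have h2 : f (u ⊔ -u) = max (f u) (f (-u)) := hf u (-u)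
    rw [h1, h2, map_neg]
    exact (abs_eq_max_neg (a := f u)).symm
  -- f x > 0
  have hfx0 : f x ≠ 0 := fun h => hxprop x h hx le_rfl
  have hfx : 0 < f x := lt_of_le_of_ne (hpos x hx.le) (Ne.symm hfx0)
  set c : ℝ := f x with hc
  set x₀ : X := c⁻¹ • x with hx₀
  have hx₀nn : 0 ≤ x₀ := smul_nonneg (inv_nonneg.mpr hfx.le) hx.le
  have hx₀ne : x₀ ≠ 0 := by
    intro h
    have : x = 0 := by
      have := congrArg (fun z => c • z) h
      simpa [hx₀, smul_smul, mul_inv_cancel₀ hfx0] using this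
    exact hx.ne' this
  have hx₀pos : 0 < x₀ := lt_of_le_of_ne hx₀nn (Ne.symm hx₀ne)
  have hfx₀ : f x₀ = 1 := by
    rw [hx₀, map_smul, smul_eq_mul, inv_mul_cancel₀ hfx0]
  -- key: any 0 ≤ y ≤ x₀ with f y = 0 is 0
  have hkey : ∀ y : X, 0 ≤ y → y ≤ x₀ → f y = 0 → y = 0 := by
    intro y hy hyx₀ hfy
    by_contra hne
    have hy' : 0 < y := lt_of_le_of_ne hy (Ne.symm hne)
    have h1 : (0:X) < c • y := by
      refine lt_of_le_of_ne (smul_nonneg hfx.le hy) ?_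
      intro h
      exact hne ((smul_eq_zero.mp h.symm).resolve_left hfx0)
    have h2 : c • y ≤ x := by
      have := smul_le_smul_of_nonneg_left hyx₀ hfx.le
      rwa [hx₀, smul_smul, mul_inv_cancel₀ hfx0, one_smul] at this
    have h3 : f (c • y) = 0 := by rw [map_smul, smul_eq_mul, hfy, mul_zero]
    exact hxprop (c • y) h3 h1 h2
  -- atom
  have hatom : IsVLAtom x₀ := by
    refine ⟨hx₀pos, fun y hy hyx₀ => ⟨f y, ?_⟩⟩
    set r : ℝ := f y with hr
    have hr0 : 0 ≤ r := hpos y hy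
    have hr1 : r ≤ 1 := by
      have := hpos (x₀ - y) (sub_nonneg.mpr hyx₀)
      rw [map_sub, hfx₀] at this
      linarith
    have hb1 : y - r • x₀ ≤ x₀ :=
      sub_le_iff_le_add.mpr (hyx₀.trans (le_add_of_nonneg_right (smul_nonneg hr0 hx₀nn)))
    have hb2 : -(y - r • x₀) ≤ x₀ := by
      rw [neg_sub]
      calc r • x₀ - y ≤ r • x₀ := sub_le_self _ hy
        _ ≤ x₀ := by
          have : 0 ≤ (1 - r) • x₀ := smul_nonneg (by linarith) hx₀nn
          rw [sub_smul, one_smul, sub_nonneg] at this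
          exact this
    have hwle : |y - r • x₀| ≤ x₀ := abs_le'.mpr ⟨hb1, hb2⟩
    have hfw : f |y - r • x₀| = 0 := by
      rw [habs, map_sub, map_smul, smul_eq_mul, hfx₀, mul_one, ← hr, sub_self, abs_zero]
    have h0 : |y - r • x₀| = 0 := hkey _ (abs_nonneg _) hwle hfw
    have h1 : y - r • x₀ ≤ 0 := h0 ▸ le_abs_self _
    have h2 : -(y - r • x₀) ≤ 0 := h0 ▸ neg_le_abs _
    have : y - r • x₀ = 0 := le_antisymm h1 (by simpa using h2)
    exact sub_eq_zero.mp this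
  -- f preserves ⊓
  have hinf : ∀ a b : X, f (a ⊓ b) = min (f a) (f b) := by
    intro a b
    have h1 : a ⊓ b = -((-a) ⊔ (-b)) := by rw [← neg_inf, neg_neg]
    rw [h1, map_neg, hf, map_neg, map_neg, max_neg_neg, neg_neg]
  -- coordinate functional
  have hcoord : IsVLCoordinateFunctional f x₀ := by
    intro z
    have hnn : 0 ≤ |z - f z • x₀| ⊓ x₀ := le_inf (abs_nonneg _) hx₀nn
    have hle : |z - f z • x₀| ⊓ x₀ ≤ x₀ := inf_le_right
    have hfz : f (|z - f z • x₀| ⊓ x₀) = 0 := by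
      rw [hinf, habs, map_sub, map_smul, smul_eq_mul, hfx₀, mul_one, sub_self, abs_zero]
      simp
    exact hkey _ hnn hle hfz
  exact ⟨x₀, f, 1, hatom, hcoord, one_pos, (one_smul ℝ f).symm⟩
end

section
/- In the Banach lattice C([0, ω₁]) of continuous real-valued functions on the compact ordinal interval [0, ω₁] (ω₁ the first uncountable ordinal), the evaluation functional δ_{ω₁} attains its norm for every equivalent lattice norm on C([0, ω₁]). -/
/-- The ordinal interval `[0, ω₁]`, where `ω₁` is the first uncountable ordinal, as a
compact Hausdorff space. -/
noncomputable abbrev OrdinalIntervalOmegaOne : Type 1 :=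
  Set.Icc (0 : Ordinal.{0}) (Cardinal.aleph 1).ord

/-! A continuous function on `[0, ω₁]` is constant on a tail `(β, ω₁]`, and since `ω₁` has
uncountable cofinality, countably many such functions share a tail. Choose `g n` in the unit
ball of `N` with `|g n ω₁|` increasing to the supremum `s` of `|g ω₁|` over that ball, and let
`e` be the indicator of a common tail, which is continuous because the tail is clopen.
Then `|g n ω₁| • e ≤ |g n|`, so `|g n ω₁| * N e ≤ 1` for all `n`, and `s • e` lies in the unit
ball of `N` and attains the supremum at `ω₁`. -/
instance : Fact ((0 : Ordinal.{0}) ≤ (Cardinal.aleph 1).ord) := ⟨zero_le⟩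

namespace OrdinalIntervalOmegaOne

instance : Nontrivial OrdinalIntervalOmegaOne :=
  ⟨⟨⊥, ⊤, fun h => (Cardinal.ord_pos.2 (Cardinal.aleph_pos 1)).ne (congrArg Subtype.val h)⟩⟩

theorem exists_lt_top_forall_le {ι : Type} [Countable ι] (a : ι → OrdinalIntervalOmegaOne)
    (ha : ∀ i, a i < ⊤) : ∃ b < ⊤, ∀ i, a i ≤ b := by
  have hcof : Cardinal.mk ι < (Cardinal.aleph 1).ord.cof := by
    rw [Cardinal.isRegular_aleph_one.cof_ord]
    exact Cardinal.mk_le_aleph0.trans_lt Cardinal.aleph0_lt_aleph_one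
  have hsup : ⨆ i, (a i : Ordinal) < (Cardinal.aleph 1).ord := Ordinal.iSup_lt_of_lt_cof hcof ha
  exact ⟨⟨_, zero_le, hsup.le⟩, hsup, fun i => le_ciSup Ordinal.bddAbove_of_small i⟩

theorem isClopen_Ioi {b : OrdinalIntervalOmegaOne} (hb : b < ⊤) : IsClopen (Set.Ioi b) := by
  have hsucc : Order.succ (b : Ordinal) ≤ (Cardinal.aleph 1).ord := Order.succ_le_of_lt hb
  have : Set.Ioi b = Set.Ici ⟨_, zero_le, hsucc⟩ := by
    ext t
    simp [← Subtype.coe_lt_coe, ← Subtype.coe_le_coe]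
  exact ⟨this ▸ isClosed_Ici, isOpen_Ioi⟩

theorem exists_lt_top_forall_gt_apply_eq {ι : Type} [Countable ι] {E : Type*} [MetricSpace E]
    (f : ι → C(OrdinalIntervalOmegaOne, E)) : ∃ b < ⊤, ∀ i t, b < t → f i t = f i ⊤ := by
  have htail : ∀ i (k : ℕ), ∃ a < ⊤, ∀ t ∈ Set.Ioi a, dist (f i t) (f i ⊤) < 1 / (k + 1) :=
    fun i k => (nhds_top_basis.tendsto_iff Metric.nhds_basis_ball).1
      ((f i).continuous.tendsto ⊤) _ Nat.one_div_pos_of_nat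
  choose a ha hdist using htail
  obtain ⟨b, hb, hab⟩ := exists_lt_top_forall_le (fun p : ι × ℕ => a p.1 p.2) fun p => ha _ _
  refine ⟨b, hb, fun i t ht => eq_of_forall_dist_le fun ε hε => ?_⟩
  obtain ⟨k, hk⟩ := exists_nat_one_div_lt hε
  exact (hdist i k t ((hab (i, k)).trans_lt ht)).le.trans hk.le

theorem exists_tail_indicator_le_abs {ι : Type} [Countable ι]
    (g : ι → C(OrdinalIntervalOmegaOne, ℝ)) :
    ∃ e : C(OrdinalIntervalOmegaOne, ℝ), 0 ≤ e ∧ e ⊤ = 1 ∧ ∀ i, |g i ⊤| • e ≤ |g i| := by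
  obtain ⟨b, hb, hgb⟩ := exists_lt_top_forall_gt_apply_eq g
  refine ⟨LocallyConstant.charFn ℝ (isClopen_Ioi hb), fun t => ?_, ?_, fun i t => ?_⟩
  · exact Set.indicator_nonneg (fun _ _ => zero_le_one) t
  · simp [LocallyConstant.coe_charFn, hb]
  · by_cases ht : b < t
    · simp [LocallyConstant.coe_charFn, ht, hgb i t ht]
    · simp [LocallyConstant.coe_charFn, ht]

end OrdinalIntervalOmegaOne

namespace LatticeNorm

variable {X : Type*} [NormedAddCommGroup X] [Lattice X] [NormedSpace ℝ X] (N : LatticeNorm X)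

theorem map_zero : N.n 0 = 0 := by
  simpa using N.smul_eq 0 0

theorem map_abs [IsOrderedAddMonoid X] (x : X) : N.n |x| = N.n x :=
  le_antisymm (N.mono _ _ (abs_abs x).le) (N.mono _ _ (abs_abs x).ge)

theorem le_of_nonneg_of_le [IsOrderedAddMonoid X] {x y : X} (hx : 0 ≤ x) (hxy : x ≤ y) :
    N.n x ≤ N.n y :=
  N.mono _ _ (by rwa [abs_of_nonneg hx, abs_of_nonneg (hx.trans hxy)])

theorem exists_norm_le_of_le_one : ∃ C, ∀ x, N.n x ≤ 1 → ‖x‖ ≤ C := by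
  obtain ⟨c, hc, hcN⟩ := N.lower
  exact ⟨1 / c, fun x hx => (le_div_iff₀' hc).2 ((hcN x).trans hx)⟩

end LatticeNorm

open OrdinalIntervalOmegaOne in
/-- in `C([0, ω₁])`, the evaluation functional at `ω₁` attains its norm for
every equivalent lattice norm. -/
theorem evaluation_at_omegaOne_attains_norm_for_every_lattice_renorming
    (N : LatticeNorm C(OrdinalIntervalOmegaOne, ℝ)) :
    ∃ f : C(OrdinalIntervalOmegaOne, ℝ), N.n f ≤ 1 ∧
      ∀ g : C(OrdinalIntervalOmegaOne, ℝ), N.n g ≤ 1 →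
        |g ⟨(Cardinal.aleph 1).ord, ⟨zero_le, le_rfl⟩⟩| ≤
          |f ⟨(Cardinal.aleph 1).ord, ⟨zero_le, le_rfl⟩⟩| := by
  change ∃ f, N.n f ≤ 1 ∧ ∀ g, N.n g ≤ 1 → |g ⊤| ≤ |f ⊤|
  set S := (fun g : C(OrdinalIntervalOmegaOne, ℝ) => |g ⊤|) '' {g | N.n g ≤ 1}
  have hS0 : (0 : ℝ) ∈ S := ⟨0, by simp [N.map_zero], by simp⟩
  have hSbdd : BddAbove S := by
    obtain ⟨C, hC⟩ := N.exists_norm_le_of_le_one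
    exact ⟨C, by rintro _ ⟨g, hg, rfl⟩; exact (g.norm_coe_le_norm ⊤).trans (hC g hg)⟩
  obtain ⟨u, -, hu, huS⟩ := exists_seq_tendsto_sSup ⟨0, hS0⟩ hSbdd
  choose g hg hgu using huS
  obtain ⟨e, he0, he_top, hge⟩ := exists_tail_indicator_le_abs g
  have hue : ∀ n, u n * N.n e ≤ 1 := fun n =>
    calc u n * N.n e = N.n (u n • e) := by rw [N.smul_eq, ← hgu n, abs_abs]
      _ ≤ N.n |g n| :=
        N.le_of_nonneg_of_le (smul_nonneg (hgu n ▸ abs_nonneg _) he0) (hgu n ▸ hge n)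
      _ = N.n (g n) := N.map_abs _
      _ ≤ 1 := hg n
  have hs0 : 0 ≤ sSup S := le_csSup hSbdd hS0
  refine ⟨sSup S • e, ?_, fun g' hg' => ?_⟩
  · rw [N.smul_eq, abs_of_nonneg hs0]
    exact le_of_tendsto' (hu.mul_const _) hue
  · simpa [he_top, abs_of_nonneg hs0] using le_csSup hSbdd ⟨g', hg', rfl⟩
end

section
/- Every lattice homomorphism on an AM-space attains its norm. -/
open Filter Topology

section NormedLattice

variable {X : Type*} [NormedAddCommGroup X] [Lattice X] [IsOrderedAddMonoid X]

theorem le_sup_inf_add {u a b : X} (hb : 0 ≤ b) : u ≤ (u ⊔ a) ⊓ (u + b) :=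
  le_inf le_sup_left (le_add_of_nonneg_right hb)

variable [HasSolidNorm X]

theorem norm_le_norm_of_nonneg_of_le {a b : X} (ha : 0 ≤ a) (hab : a ≤ b) : ‖a‖ ≤ ‖b‖ :=
  HasSolidNorm.solid <| by rwa [abs_of_nonneg ha, abs_of_nonneg (ha.trans hab)]

theorem norm_posPart_le (x : X) : ‖x⁺‖ ≤ ‖x‖ :=
  norm_abs_eq_norm x ▸
    norm_le_norm_of_nonneg_of_le (posPart_nonneg x) (sup_le (le_abs_self x) (abs_nonneg x))

variable {u a b : X}

theorem norm_sup_inf_add_sub_le (hb : 0 ≤ b) : ‖(u ⊔ a) ⊓ (u + b) - u‖ ≤ ‖b‖ :=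
  norm_le_norm_of_nonneg_of_le (sub_nonneg.2 (le_sup_inf_add hb))
    (sub_le_iff_le_add'.2 inf_le_right)

theorem norm_sup_inf_add_le (hAM : ∀ x y : X, 0 ≤ x → 0 ≤ y → ‖x ⊔ y‖ = max ‖x‖ ‖y‖)
    (hu : 0 ≤ u) (ha : 0 ≤ a) (hb : 0 ≤ b) : ‖(u ⊔ a) ⊓ (u + b)‖ ≤ max ‖u‖ ‖a‖ :=
  hAM u a hu ha ▸ norm_le_norm_of_nonneg_of_le (hu.trans (le_sup_inf_add hb)) inf_le_left

end NormedLattice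

namespace IsLatticeHomFunctional

variable {X : Type*} [NormedAddCommGroup X] [Lattice X] [IsOrderedAddMonoid X] [HasSolidNorm X]
  [NormedSpace ℝ X] {f : X →L[ℝ] ℝ}

theorem map_inf (hf : IsLatticeHomFunctional f) (x y : X) : f (x ⊓ y) = min (f x) (f y) := by
  have h := inf_add_sup (f x) (f y)
  rw [eq_sub_of_add_eq (inf_add_sup x y), map_sub, map_add, hf]
  linarith

theorem map_abs (hf : IsLatticeHomFunctional f) (x : X) : f |x| = |f x| := by
  rw [abs, hf, map_neg, abs]

theorem map_posPart (hf : IsLatticeHomFunctional f) (x : X) : f x⁺ = max (f x) 0 := by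
  rw [posPart_def, hf, map_zero]

theorem exists_nonneg_le_apply (hf : IsLatticeHomFunctional f) {c : ℝ} (hc : c < 1) :
    ∃ a : X, 0 ≤ a ∧ ‖a‖ ≤ 1 ∧ c * ‖f‖ ≤ f a := by
  rcases (norm_nonneg f).eq_or_lt with hf0 | hf0
  · exact ⟨0, le_rfl, by simp, by simp [← hf0]⟩
  obtain ⟨x, hx, hcx⟩ := f.exists_lt_apply_of_lt_opNorm (by nlinarith : c * ‖f‖ < ‖f‖)
  refine ⟨|x|, abs_nonneg x, (norm_abs_eq_norm x).trans_le hx.le, ?_⟩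
  rw [hf.map_abs, ← Real.norm_eq_abs]
  exact hcx.le

theorem min_le_apply_sup_inf_add (hf : IsLatticeHomFunctional f) (u a b : X) :
    min (f a) (f u + f b) ≤ f ((u ⊔ a) ⊓ (u + b)) := by
  rw [hf.map_inf, hf, map_add]
  exact min_le_min_right _ (le_max_right _ _)

theorem exists_geometric_norming_seq
    (hAM : ∀ x y : X, 0 ≤ x → 0 ≤ y → ‖x ⊔ y‖ = max ‖x‖ ‖y‖) (hf : IsLatticeHomFunctional f) :
    ∃ u : ℕ → X, (∀ n, ‖u n‖ ≤ 1) ∧ (∀ n, ‖u (n + 1) - u n‖ ≤ (1 / 2) ^ n) ∧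
      ∀ n, (1 - (1 / 2) ^ n) * ‖f‖ ≤ f (u n) := by
  choose a ha0 ha1 hfa using fun n : ℕ =>
    hf.exists_nonneg_le_apply (c := 1 - (1 / 2) ^ (n + 1)) (sub_lt_self _ (by positivity))
  -- The order need not be compatible with scalars, so `2⁻ⁿ • aₙ` is made positive by hand.
  set b : ℕ → X := fun n => ((1 / 2 : ℝ) ^ n • a n)⁺
  have hb0 (n : ℕ) : 0 ≤ b n := posPart_nonneg _
  have hpow (n : ℕ) : (0 : ℝ) ≤ (1 / 2) ^ n := by positivity
  have hb1 (n : ℕ) : ‖b n‖ ≤ (1 / 2) ^ n :=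
    calc ‖b n‖ ≤ ‖(1 / 2 : ℝ) ^ n • a n‖ := norm_posPart_le _
      _ = (1 / 2) ^ n * ‖a n‖ := by rw [norm_smul, Real.norm_of_nonneg (hpow n)]
      _ ≤ (1 / 2) ^ n := mul_le_of_le_one_right (hpow n) (ha1 n)
  have hfb (n : ℕ) : (1 / 2) ^ n * f (a n) ≤ f (b n) := by
    rw [hf.map_posPart, map_smul, smul_eq_mul]
    exact le_max_left _ _
  let u : ℕ → X := fun n => n.rec 0 fun k v => (v ⊔ a k) ⊓ (v + b k)
  have hstep (n : ℕ) : u (n + 1) = (u n ⊔ a n) ⊓ (u n + b n) := rfl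
  have key (n : ℕ) : 0 ≤ u n ∧ ‖u n‖ ≤ 1 ∧ (1 - (1 / 2) ^ n) * ‖f‖ ≤ f (u n) := by
    induction n with
    | zero => simp [u]
    | succ n ih =>
      obtain ⟨hu0, hu1, hfu⟩ := ih
      rw [hstep]
      refine ⟨hu0.trans (le_sup_inf_add (hb0 n)),
        (norm_sup_inf_add_le hAM hu0 (ha0 n) (hb0 n)).trans (max_le hu1 (ha1 n)), ?_⟩
      -- `f aₙ ≥ ‖f‖ / 2`, so the increment `f bₙ ≥ 2⁻ⁿ f aₙ` halves the gap `2⁻ⁿ ‖f‖`.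
      have hfa' : ‖f‖ / 2 ≤ f (a n) := by
        have : (1 / 2 : ℝ) ^ (n + 1) ≤ 1 / 2 :=
          pow_le_of_le_one (by norm_num) (by norm_num) n.succ_ne_zero
        nlinarith [hfa n, norm_nonneg f, hpow (n + 1)]
      refine le_trans (le_min (hfa n) ?_) (hf.min_le_apply_sup_inf_add _ _ _)
      rw [pow_succ]
      nlinarith [mul_le_mul_of_nonneg_left hfa' (hpow n), hfb n]
  exact ⟨u, fun n => (key n).2.1, fun n => (norm_sup_inf_add_sub_le (hb0 n)).trans (hb1 n),
    fun n => (key n).2.2⟩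

end IsLatticeHomFunctional

/-- every lattice homomorphism on an AM-space attains its norm. -/
theorem latticeHom_on_AM_space_attains_norm
    {X : Type*} [NormedAddCommGroup X] [Lattice X] [IsOrderedAddMonoid X] [HasSolidNorm X] [NormedSpace ℝ X] [CompleteSpace X]
    (hAM : ∀ x y : X, 0 ≤ x → 0 ≤ y → ‖x ⊔ y‖ = max ‖x‖ ‖y‖)
    (f : X →L[ℝ] ℝ) (hf : IsLatticeHomFunctional f) :
    ∃ x : X, ‖x‖ ≤ 1 ∧ |f x| = ‖f‖ := by
  obtain ⟨u, hu1, hdist, hfu⟩ := hf.exists_geometric_norming_seq hAM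
  have hcauchy : CauchySeq u :=
    cauchySeq_of_le_geometric (1 / 2) 1 (by norm_num) fun n => by
      simpa [dist_eq_norm'] using hdist n
  obtain ⟨x, hx⟩ := cauchySeq_tendsto_of_complete hcauchy
  have hx1 : ‖x‖ ≤ 1 := le_of_tendsto hx.norm (Eventually.of_forall hu1)
  have hlim : Tendsto (fun n : ℕ => (1 - (1 / 2 : ℝ) ^ n) * ‖f‖) atTop (𝓝 ‖f‖) := by
    simpa using ((tendsto_pow_atTop_nhds_zero_of_lt_one (by norm_num : (0 : ℝ) ≤ 1 / 2)
      (by norm_num)).const_sub 1).mul_const ‖f‖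
  have hfx : ‖f‖ ≤ f x :=
    le_of_tendsto_of_tendsto' hlim ((f.continuous.tendsto x).comp hx) hfu
  refine ⟨x, hx1, le_antisymm ?_ (hfx.trans (le_abs_self _))⟩
  calc |f x| = ‖f x‖ := (Real.norm_eq_abs _).symm
    _ ≤ ‖f‖ * ‖x‖ := f.le_opNorm x
    _ ≤ ‖f‖ := mul_le_of_le_one_right (norm_nonneg f) hx1
end

section
/- Let μ be a localizable measure (so that L₁(μ)* = L∞(μ)) and let x* be a norm-one functional on L₁(μ), represented by g ∈ L∞(μ) with ‖g‖∞ = 1, which does not attain its norm. Then the set {|g| = 1} is μ-null, and defining y*ₙ := (1/n)·g·χ_{{|g| ≤ 1 - 1/n}}, each y*ₙ satisfies |x*(f)| + |y*ₙ(f)| ≤ 1 for all f in the unit ball of L₁(μ), and n·y*ₙ converges to x* in the weak* topology. -/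
/-!
If `{|g| = 1}` were not null, semifiniteness would give a subset `B` of finite positive measure,
and `f = g χ_B / μ B` would have `‖f‖₁ = 1` and `∫ f g = 1`; so `|g| < 1` a.e.
On `{|g| ≤ 1 - t}` we have `|g| + t |g| ≤ (1 - t)(1 + t) ≤ 1`, and off it the truncation
`t g χ_{|g| ≤ 1 - t}` vanishes; integrating against `|f|` gives `|x*(f)| + |y*(f)| ≤ ‖f‖₁`.
Finally `n y*ₙ = g χ_{|g| ≤ 1 - 1/n}` is eventually equal to `g` wherever `|g| < 1`, so weak*
convergence is dominated convergence with dominating function `|f|`.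
-/

open MeasureTheory Filter Set Topology

section

variable {α : Type*}

section Measure

variable [MeasurableSpace α] {μ : Measure α}

theorem abs_integral_mul_add_abs_integral_mul_le {f h₁ h₂ : α → ℝ} (hf : Integrable f μ)
    (hf₁ : ∫ a, |f a| ∂μ ≤ 1) (hm₁ : AEStronglyMeasurable h₁ μ)
    (hm₂ : AEStronglyMeasurable h₂ μ) (hle : ∀ᵐ a ∂μ, |h₁ a| + |h₂ a| ≤ 1) :
    |∫ a, f a * h₁ a ∂μ| + |∫ a, f a * h₂ a ∂μ| ≤ 1 := by
  have hi₁ : Integrable (fun a => f a * h₁ a) μ :=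
    hf.mul_bdd (c := 1) hm₁ (hle.mono fun a ha => by
      rw [Real.norm_eq_abs]; linarith [abs_nonneg (h₂ a)])
  have hi₂ : Integrable (fun a => f a * h₂ a) μ :=
    hf.mul_bdd (c := 1) hm₂ (hle.mono fun a ha => by
      rw [Real.norm_eq_abs]; linarith [abs_nonneg (h₁ a)])
  calc |∫ a, f a * h₁ a ∂μ| + |∫ a, f a * h₂ a ∂μ|
      ≤ ∫ a, |f a * h₁ a| ∂μ + ∫ a, |f a * h₂ a| ∂μ :=
        add_le_add abs_integral_le_integral_abs abs_integral_le_integral_abs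
    _ = ∫ a, |f a * h₁ a| + |f a * h₂ a| ∂μ := (integral_add hi₁.abs hi₂.abs).symm
    _ ≤ ∫ a, |f a| ∂μ :=
        integral_mono_ae (hi₁.abs.add hi₂.abs) hf.abs (hle.mono fun a ha => by
          simp only [abs_mul, ← mul_add]
          exact mul_le_of_le_one_right (abs_nonneg _) ha)
    _ ≤ 1 := hf₁

theorem exists_integral_abs_eq_one_integral_mul_eq_one {g : α → ℝ} (hg : Measurable g)
    {B : Set α} (hB : MeasurableSet B) (hB₀ : 0 < μ B) (hB_top : μ B < ⊤)
    (hgB : ∀ a ∈ B, |g a| = 1) :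
    ∃ f : α → ℝ, Integrable f μ ∧ ∫ a, |f a| ∂μ = 1 ∧ ∫ a, f a * g a ∂μ = 1 := by
  set c := μ.real B
  have hc : 0 < c := ENNReal.toReal_pos hB₀.ne' hB_top.ne
  set f : α → ℝ := fun a => c⁻¹ * B.indicator g a
  have habs : (fun a => |f a|) = B.indicator fun _ => c⁻¹ := by
    ext a
    by_cases ha : a ∈ B <;> simp [f, ha, hgB, abs_of_pos hc]
  have hmul : (fun a => f a * g a) = B.indicator fun _ => c⁻¹ := by
    ext a
    by_cases ha : a ∈ B
    · have hgg : g a * g a = 1 := by rw [← abs_mul_self, abs_mul, hgB a ha, one_mul]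
      simp [f, ha, mul_assoc, hgg]
    · simp [f, ha]
  have hint : ∫ a, B.indicator (fun _ => c⁻¹) a ∂μ = 1 := by
    rw [integral_indicator_const _ hB, smul_eq_mul, mul_inv_cancel₀ hc.ne']
  refine ⟨f, ?_, by rw [habs, hint], by rw [hmul, hint]⟩
  refine (integrable_norm_iff ((hg.indicator hB).const_mul _).aestronglyMeasurable).1 ?_
  simp only [Real.norm_eq_abs]
  rw [habs]
  exact (integrable_indicator_iff hB).2 (integrableOn_const hB_top.ne)

theorem measure_abs_eq_one_eq_zero_of_forall_abs_integral_mul_lt_one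
    (hloc : ∀ A : Set α, MeasurableSet A → 0 < μ A →
      ∃ B ⊆ A, MeasurableSet B ∧ 0 < μ B ∧ μ B < ⊤)
    {g : α → ℝ} (hg : Measurable g)
    (hna : ∀ f : α → ℝ, Integrable f μ → (∫ a, |f a| ∂μ) ≤ 1 → |∫ a, f a * g a ∂μ| < 1) :
    μ {a | |g a| = 1} = 0 := by
  by_contra h
  obtain ⟨B, hBA, hB, hB₀, hB_top⟩ :=
    hloc _ (hg.abs (measurableSet_singleton 1)) (pos_iff_ne_zero.2 h)
  obtain ⟨f, hf, hf₁, hfg⟩ :=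
    exists_integral_abs_eq_one_integral_mul_eq_one hg hB hB₀ hB_top fun a ha => hBA ha
  simpa [hfg] using hna f hf hf₁.le

theorem tendsto_integral_mul_of_ae_tendsto {f h₀ : α → ℝ} {h : ℕ → α → ℝ} {C : ℝ}
    (hf : Integrable f μ) (hm : ∀ n, AEStronglyMeasurable (h n) μ)
    (hbound : ∀ n, ∀ᵐ a ∂μ, |h n a| ≤ C)
    (hlim : ∀ᵐ a ∂μ, Tendsto (fun n => h n a) atTop (𝓝 (h₀ a))) :
    Tendsto (fun n => ∫ a, f a * h n a ∂μ) atTop (𝓝 (∫ a, f a * h₀ a ∂μ)) :=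
  tendsto_integral_of_dominated_convergence (fun a => |f a| * C)
    (fun n => hf.aestronglyMeasurable.mul (hm n)) (hf.abs.mul_const C)
    (fun n => (hbound n).mono fun a ha => by
      rw [Real.norm_eq_abs, abs_mul]; exact mul_le_mul_of_nonneg_left ha (abs_nonneg _))
    (hlim.mono fun a ha => ha.const_mul (f a))

end Measure

/-- The paper's `y*ₙ` is `scaledTruncation g (1 / n)`. -/
noncomputable def scaledTruncation (g : α → ℝ) (t : ℝ) : α → ℝ :=
  {x | |g x| ≤ 1 - t}.indicator fun x => t * g x

section scaledTruncation

variable {g : α → ℝ}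

theorem Measurable.scaledTruncation [MeasurableSpace α] (hg : Measurable g) (t : ℝ) :
    Measurable (scaledTruncation g t) :=
  (hg.const_mul t).indicator (hg.abs measurableSet_Iic)

theorem abs_add_abs_scaledTruncation_le_one {t : ℝ} (ht : 0 ≤ t) {a : α} (ha : |g a| ≤ 1) :
    |g a| + |scaledTruncation g t a| ≤ 1 := by
  rw [scaledTruncation, indicator_apply]
  split_ifs with haS
  · rw [abs_mul, abs_of_nonneg ht]
    nlinarith [abs_nonneg (g a), show |g a| ≤ 1 - t from haS]
  · simpa using ha

theorem natCast_mul_scaledTruncation {n : ℕ} (hn : n ≠ 0) (a : α) :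
    n * scaledTruncation g (1 / n) a = {x | |g x| ≤ 1 - 1 / (n : ℝ)}.indicator g a := by
  simp only [scaledTruncation, ← indicator_const_mul]
  congr 1
  ext x
  field_simp

theorem abs_natCast_mul_scaledTruncation_le (n : ℕ) (a : α) :
    |n * scaledTruncation g (1 / n) a| ≤ |g a| := by
  rcases eq_or_ne n 0 with rfl | hn
  · simp
  rw [natCast_mul_scaledTruncation hn]
  exact norm_indicator_le_norm_self g a

theorem tendsto_natCast_mul_scaledTruncation {a : α} (ha : |g a| < 1) :
    Tendsto (fun n : ℕ => n * scaledTruncation g (1 / n) a) atTop (𝓝 (g a)) := by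
  have hsmall : ∀ᶠ n : ℕ in atTop, 1 / (n : ℝ) < 1 - |g a| :=
    tendsto_one_div_atTop_nhds_zero_nat.eventually (gt_mem_nhds (sub_pos.2 ha))
  refine tendsto_const_nhds.congr' ?_
  filter_upwards [hsmall, eventually_ne_atTop 0] with n hn hn₀
  have haS : |g a| ≤ 1 - 1 / (n : ℝ) := by linarith
  rw [natCast_mul_scaledTruncation hn₀,
    indicator_of_mem (s := {x | |g x| ≤ 1 - 1 / (n : ℝ)}) haS]

end scaledTruncation

end

theorem L1_nonattaining_functional_approximation_general
    {α : Type*} [MeasurableSpace α] (μ : Measure α)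
    (hloc : ∀ A : Set α, MeasurableSet A → 0 < μ A →
      ∃ B ⊆ A, MeasurableSet B ∧ 0 < μ B ∧ μ B < ⊤)
    (g : α → ℝ) (hg : Measurable g)
    (hbd : ∀ᵐ a ∂μ, |g a| ≤ 1)
    (hna : ∀ f : α → ℝ, Integrable f μ → (∫ a, |f a| ∂μ) ≤ 1 →
      |∫ a, f a * g a ∂μ| < 1) :
    μ {a | |g a| = 1} = 0 ∧
    (∀ n : ℕ, 0 < n → ∀ f : α → ℝ, Integrable f μ → (∫ a, |f a| ∂μ) ≤ 1 →
      |∫ a, f a * g a ∂μ| +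
        |∫ a, f a * Set.indicator {x | |g x| ≤ 1 - 1 / (n : ℝ)}
          (fun x => (1 / (n : ℝ)) * g x) a ∂μ| ≤ 1) ∧
    (∀ f : α → ℝ, Integrable f μ →
      Tendsto (fun n : ℕ => ∫ a, f a * ((n : ℝ) *
          Set.indicator {x | |g x| ≤ 1 - 1 / (n : ℝ)}
            (fun x => (1 / (n : ℝ)) * g x) a) ∂μ)
        atTop (nhds (∫ a, f a * g a ∂μ))) := by
  have hnull := measure_abs_eq_one_eq_zero_of_forall_abs_integral_mul_lt_one hloc hg hna
  refine ⟨hnull, fun n _ f hf hf₁ => ?_, fun f hf => ?_⟩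
  · exact abs_integral_mul_add_abs_integral_mul_le hf hf₁ hg.aestronglyMeasurable
      (hg.scaledTruncation _).aestronglyMeasurable
      (hbd.mono fun a ha => abs_add_abs_scaledTruncation_le_one (by positivity) ha)
  · have hlt : ∀ᵐ a ∂μ, |g a| < 1 := by
      filter_upwards [hbd, measure_eq_zero_iff_ae_notMem.1 hnull] with a ha hne
      exact ha.lt_of_ne hne
    exact tendsto_integral_mul_of_ae_tendsto hf
      (fun n => (measurable_const.mul (hg.scaledTruncation _)).aestronglyMeasurable)
      (fun n => hbd.mono fun a ha => (abs_natCast_mul_scaledTruncation_le n a).trans ha)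
      (hlt.mono fun a ha => tendsto_natCast_mul_scaledTruncation ha)

/-- for a localizable measure `μ` (here: `μ` is semifinite, which follows
from localizability) and `g ∈ L∞(μ)` with `‖g‖∞ = 1` representing a norm-one functional on
`L₁(μ)` that does not attain its norm: the set `{|g| = 1}` is `μ`-null, the functionals
`yₙ = (1/n)·g·χ_{{|g| ≤ 1 - 1/n}}` satisfy `|x*(f)| + |yₙ(f)| ≤ 1` on the unit ball of
`L₁(μ)`, and `n·yₙ → x*` in the weak* topology. -/
theorem L1_nonattaining_functional_approximation
    {α : Type*} [MeasurableSpace α] (μ : Measure α)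
    (hloc : ∀ A : Set α, MeasurableSet A → 0 < μ A →
      ∃ B ⊆ A, MeasurableSet B ∧ 0 < μ B ∧ μ B < ⊤)
    (g : α → ℝ) (hg : Measurable g)
    (hbd : ∀ᵐ a ∂μ, |g a| ≤ 1) (hnorm : eLpNorm g ⊤ μ = 1)
    (hna : ∀ f : α → ℝ, Integrable f μ → (∫ a, |f a| ∂μ) ≤ 1 →
      |∫ a, f a * g a ∂μ| < 1) :
    μ {a | |g a| = 1} = 0 ∧
    (∀ n : ℕ, 0 < n → ∀ f : α → ℝ, Integrable f μ → (∫ a, |f a| ∂μ) ≤ 1 →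
      |∫ a, f a * g a ∂μ| +
        |∫ a, f a * Set.indicator {x | |g x| ≤ 1 - 1 / (n : ℝ)}
          (fun x => (1 / (n : ℝ)) * g x) a ∂μ| ≤ 1) ∧
    (∀ f : α → ℝ, Integrable f μ →
      Tendsto (fun n : ℕ => ∫ a, f a * ((n : ℝ) *
          Set.indicator {x | |g x| ≤ 1 - 1 / (n : ℝ)}
            (fun x => (1 / (n : ℝ)) * g x) a) ∂μ)
        atTop (nhds (∫ a, f a * g a ∂μ))) :=
  L1_nonattaining_functional_approximation_general μ hloc g hg hbd hna
end

section
/- Let 𝕃 be a lattice (partially ordered set closed under binary suprema and infima), 𝕃* the set of lattice homomorphisms from 𝕃 into [-1,1] with the product topology, and C_ph(𝕃*) the AM-space of continuous positively homogeneous real functions on 𝕃* with sup norm. Then every nonzero x* ∈ 𝕃*, viewed via the evaluation functional f ↦ f(x*) on C_ph(𝕃*), attains its norm; moreover its norm equals max{|inf_{x∈𝕃} x*(x)|, |sup_{x∈𝕃} x*(x)|}. -/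
/-- `𝕃*`: the set of lattice homomorphisms from a lattice `L` into `[-1,1]`, as a subset of
`L → ℝ` (carrying the product topology on the subtype). -/
def LatticeDual (L : Type*) [Lattice L] : Set (L → ℝ) :=
  {φ | (∀ x : L, |φ x| ≤ 1) ∧ (∀ x y : L, φ (x ⊔ y) = max (φ x) (φ y)) ∧
    (∀ x y : L, φ (x ⊓ y) = min (φ x) (φ y))}

/-- `C_ph(𝕃*)`: the continuous positively homogeneous real-valued functions on `𝕃*`. -/
def Cph (L : Type*) [Lattice L] : Set ((LatticeDual L) → ℝ) :=
  {f | Continuous f ∧ ∀ (φ ψ : LatticeDual L) (r : ℝ), 0 ≤ r → r ≤ 1 →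
    (ψ : L → ℝ) = r • (φ : L → ℝ) → f ψ = r * f φ}

/-!
Let `M = sup_x |x*(x)|`, which equals `max {|inf x*|, |sup x*|}`. Since `x* = M • (x*/M)` with
`x*/M ∈ 𝕃*`, homogeneity gives `|f(x*)| = M |f(x*/M)| ≤ M` on the unit ball.

For attainment, pick `z_k` with `t_k = |x*(z_k)|` increasing to `M` and put
`u_k(φ) = φ(z_k) / x*(z_k)`, so that `u_k(x*) = 1` and `t_k u_k ≤ 1` on `𝕃*`. Then
`f(φ) = sup_n t_n · min_{k ≤ n} u_k(φ)` is positively homogeneous, bounded by `1`, and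
`f(x*) = sup_n t_n = M`. Because of the running minimum, no term beyond the `N`-th exceeds the
`N`-th by more than `(M - t_N) / t_N`, so `f` is a uniform limit of continuous functions.
-/

open Filter Topology

theorem continuous_iSup_of_le_add {X : Type*} [TopologicalSpace X] {g : ℕ → X → ℝ}
    (hg : ∀ n, Continuous (g n)) {ε : ℕ → ℝ} (hε : Tendsto ε atTop (𝓝 0))
    (htail : ∀ N n, N ≤ n → ∀ x, g n x ≤ g N x + ε N) :
    Continuous fun x ↦ ⨆ n, g n x := by
  set G : ℕ → X → ℝ := fun N x ↦
    (Finset.range (N + 1)).sup' Finset.nonempty_range_add_one (g · x)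
  have hG : ∀ N, Continuous (G N) := fun N ↦
    Continuous.finset_sup'_apply _ fun n _ ↦ hg n
  have hbdd : ∀ x, BddAbove (Set.range (g · x)) := fun x ↦
    ⟨g 0 x + ε 0, by rintro _ ⟨n, rfl⟩; exact htail 0 n n.zero_le x⟩
  have hlower : ∀ N x, G N x ≤ ⨆ n, g n x := fun N x ↦
    Finset.sup'_le _ _ fun n _ ↦ le_ciSup (hbdd x) n
  have hupper : ∀ N x, ⨆ n, g n x ≤ G N x + ε N := fun N x ↦ by
    have hN : g N x ≤ G N x := Finset.le_sup' (g · x) (Finset.self_mem_range_succ N)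
    refine ciSup_le fun n ↦ ?_
    rcases le_total n N with h | h
    · have := Finset.le_sup' (g · x) (Finset.mem_range_succ_iff.2 h)
      linarith [htail N N le_rfl x]
    · linarith [htail N n h x]
  have hunif : TendstoUniformly G (fun x ↦ ⨆ n, g n x) atTop := by
    rw [Metric.tendstoUniformly_iff]
    intro δ hδ
    filter_upwards [Metric.tendsto_nhds.mp hε δ hδ] with N hN x
    rw [Real.dist_0_eq_abs] at hN
    rw [Real.dist_eq, abs_of_nonneg (sub_nonneg.2 (hlower N x))]
    linarith [hupper N x, le_abs_self (ε N)]
  exact hunif.continuous (Frequently.of_forall hG)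

section RunningInf

variable {X : Type*}

noncomputable def runningInf (u : ℕ → X → ℝ) (n : ℕ) (x : X) : ℝ :=
  (Finset.range (n + 1)).inf' Finset.nonempty_range_add_one (u · x)

variable {u : ℕ → X → ℝ}

theorem runningInf_le (n : ℕ) (x : X) : runningInf u n x ≤ u n x :=
  Finset.inf'_le _ (Finset.self_mem_range_succ n)

theorem runningInf_zero (x : X) : runningInf u 0 x = u 0 x := by
  simp [runningInf]

theorem runningInf_le_runningInf {N n : ℕ} (h : N ≤ n) (x : X) :
    runningInf u n x ≤ runningInf u N x :=
  Finset.inf'_mono _ (Finset.range_subset_range.2 (by omega)) _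

theorem continuous_runningInf [TopologicalSpace X] (hu : ∀ k, Continuous (u k)) (n : ℕ) :
    Continuous (runningInf u n) :=
  Continuous.finset_inf'_apply _ fun k _ ↦ hu k

theorem runningInf_of_forall_eq_mul {x y : X} {r : ℝ} (hr : 0 ≤ r)
    (h : ∀ k, u k y = r * u k x) (n : ℕ) : runningInf u n y = r * runningInf u n x := by
  simp only [runningInf, h]
  exact (Finset.apply_inf'_eq_inf'_comp _ (r * ·) fun a b ↦ mul_min_of_nonneg a b hr).symm

theorem runningInf_of_forall_eq_one {x : X} (h : ∀ k, u k x = 1) (n : ℕ) :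
    runningInf u n x = 1 := by
  simp only [runningInf, h, Finset.inf'_const]

theorem mul_runningInf_le_add {t : ℕ → ℝ} (ht : Monotone t) {N n : ℕ} (hNn : N ≤ n)
    (htN : 0 < t N) {x : X} (hx : t N * u N x ≤ 1) :
    t n * runningInf u n x ≤ t N * runningInf u N x + (t n - t N) / t N := by
  have hm : runningInf u N x ≤ 1 / t N := by
    rw [le_div_iff₀ htN]
    linarith [mul_le_mul_of_nonneg_left (runningInf_le (u := u) N x) htN.le]
  calc t n * runningInf u n x ≤ t n * runningInf u N x :=
        mul_le_mul_of_nonneg_left (runningInf_le_runningInf hNn x) (htN.le.trans (ht hNn))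
    _ = t N * runningInf u N x + (t n - t N) * runningInf u N x := by ring
    _ ≤ t N * runningInf u N x + (t n - t N) * (1 / t N) := by
        gcongr
        exact sub_nonneg.2 (ht hNn)
    _ = t N * runningInf u N x + (t n - t N) / t N := by rw [mul_one_div]

end RunningInf

section SupScaledRunningInf

variable {X : Type*} {u : ℕ → X → ℝ} {t : ℕ → ℝ}

noncomputable def supScaledRunningInf (t : ℕ → ℝ) (u : ℕ → X → ℝ) (x : X) : ℝ :=
  ⨆ n, t n * runningInf u n x

theorem continuous_supScaledRunningInf [TopologicalSpace X] (hu : ∀ k, Continuous (u k))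
    (ht : Monotone t) (ht0 : 0 < t 0) {M : ℝ} (htM : Tendsto t atTop (𝓝 M))
    (hle : ∀ k x, t k * u k x ≤ 1) : Continuous (supScaledRunningInf t u) := by
  have htpos : ∀ k, 0 < t k := fun k ↦ ht0.trans_le (ht k.zero_le)
  have hε : Tendsto (fun N ↦ (M - t N) / t N) atTop (𝓝 0) := by
    have hM : M ≠ 0 := (ht0.trans_le (ht.ge_of_tendsto htM 0)).ne'
    simpa [div_eq_mul_inv] using ((tendsto_const_nhds (x := M)).sub htM).mul (htM.inv₀ hM)
  refine continuous_iSup_of_le_add (fun n ↦ continuous_const.mul (continuous_runningInf hu n))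
    hε fun N n hNn x ↦ ?_
  have hstep := mul_runningInf_le_add ht hNn (htpos N) (hle N x)
  have hgap : (t n - t N) / t N ≤ (M - t N) / t N := by
    gcongr
    · exact (htpos N).le
    · exact ht.ge_of_tendsto htM n
  linarith

theorem abs_supScaledRunningInf_le_one (ht : ∀ k, 0 ≤ t k) (hle : ∀ k x, |t k * u k x| ≤ 1)
    (x : X) : |supScaledRunningInf t u x| ≤ 1 := by
  have hterm : ∀ n, t n * runningInf u n x ≤ 1 := fun n ↦
    (mul_le_mul_of_nonneg_left (runningInf_le n x) (ht n)).trans (le_of_abs_le (hle n x))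
  have h0 : -1 ≤ t 0 * runningInf u 0 x := by
    rw [runningInf_zero]
    exact neg_le_of_abs_le (hle 0 x)
  rw [abs_le]
  exact ⟨h0.trans (le_ciSup ⟨1, Set.forall_mem_range.2 hterm⟩ 0), ciSup_le hterm⟩

theorem supScaledRunningInf_of_forall_eq_mul {x y : X} {r : ℝ} (hr : 0 ≤ r)
    (h : ∀ k, u k y = r * u k x) :
    supScaledRunningInf t u y = r * supScaledRunningInf t u x := by
  simp only [supScaledRunningInf, runningInf_of_forall_eq_mul hr h, Real.mul_iSup_of_nonneg hr]
  congr 1 with n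
  ring

theorem supScaledRunningInf_of_forall_eq_one (ht : Monotone t) {M : ℝ}
    (htM : Tendsto t atTop (𝓝 M)) {x : X} (h : ∀ k, u k x = 1) :
    supScaledRunningInf t u x = M := by
  simp only [supScaledRunningInf, runningInf_of_forall_eq_one h, mul_one]
  exact tendsto_nhds_unique
    (tendsto_atTop_ciSup ht ⟨M, Set.forall_mem_range.2 (ht.ge_of_tendsto htM)⟩) htM

end SupScaledRunningInf

theorem iSup_abs_eq_max_abs_sInf_abs_sSup {ι : Type*} {f : ι → ℝ}
    (hf : BddAbove (Set.range fun i ↦ |f i|)) :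
    ⨆ i, |f i| = max |sInf (Set.range f)| |sSup (Set.range f)| := by
  rcases isEmpty_or_nonempty ι with hι | ⟨⟨i₀⟩⟩
  · simp [Set.range_eq_empty]
  set S := ⨆ i, |f i|
  set a := sInf (Set.range f)
  set b := sSup (Set.range f)
  have hS : ∀ i, |f i| ≤ S := le_ciSup hf
  have hbddA : BddAbove (Set.range f) := ⟨S, Set.forall_mem_range.2 fun i ↦ le_of_abs_le (hS i)⟩
  have hbddB : BddBelow (Set.range f) :=
    ⟨-S, Set.forall_mem_range.2 fun i ↦ neg_le_of_abs_le (hS i)⟩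
  have ha : ∀ i, a ≤ f i := fun i ↦ csInf_le hbddB ⟨i, rfl⟩
  have hb : ∀ i, f i ≤ b := fun i ↦ le_csSup hbddA ⟨i, rfl⟩
  have hSa : -S ≤ a := le_csInf ⟨f i₀, i₀, rfl⟩ <| Set.forall_mem_range.2 fun i ↦
    neg_le_of_abs_le (hS i)
  have hSb : b ≤ S := csSup_le ⟨f i₀, i₀, rfl⟩ <| Set.forall_mem_range.2 fun i ↦
    le_of_abs_le (hS i)
  have hS₀ := abs_le.1 (hS i₀)
  have hmax : ∀ i, |f i| ≤ max |a| |b| := fun i ↦ abs_le.2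
    ⟨by linarith [ha i, neg_abs_le a, le_max_left |a| |b|],
      by linarith [hb i, le_abs_self b, le_max_right |a| |b|]⟩
  refine le_antisymm (Real.iSup_le hmax (by positivity))
    (max_le (abs_le.2 ⟨?_, ?_⟩) (abs_le.2 ⟨?_, ?_⟩))
  all_goals linarith [ha i₀, hb i₀]

theorem exists_seq_monotone_tendsto_iSup_of_pos {ι : Type*} {g : ι → ℝ}
    (hg : BddAbove (Set.range g)) (hpos : 0 < ⨆ i, g i) :
    ∃ z : ℕ → ι, Monotone (g ∘ z) ∧ 0 < g (z 0) ∧ Tendsto (g ∘ z) atTop (𝓝 (⨆ i, g i)) := by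
  have : Nonempty ι := by
    by_contra h
    rw [not_nonempty_iff] at h
    simp at hpos
  obtain ⟨v, hv, hvlim, hvmem⟩ := exists_seq_tendsto_sSup (Set.range_nonempty g) hg
  choose z hz using hvmem
  obtain ⟨N, hN⟩ := eventually_atTop.1 (hvlim.eventually (lt_mem_nhds hpos))
  have hgz : (g ∘ fun n ↦ z (n + N)) = fun n ↦ v (n + N) := funext fun n ↦ hz (n + N)
  refine ⟨fun n ↦ z (n + N), ?_⟩
  rw [hgz]
  exact ⟨fun m n h ↦ hv (by omega), by simpa [hz] using hN N le_rfl,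
    hvlim.comp (tendsto_add_atTop_nat N)⟩

section LatticeDual

variable {L : Type*} [Lattice L]

theorem bddAbove_range_abs_of_mem_latticeDual {φ : L → ℝ} (hφ : φ ∈ LatticeDual L) :
    BddAbove (Set.range fun x ↦ |φ x|) :=
  ⟨1, Set.forall_mem_range.2 hφ.1⟩

theorem smul_mem_latticeDual {φ : L → ℝ} (hφ : φ ∈ LatticeDual L) {c : ℝ} (hc : 0 ≤ c)
    (hbound : ∀ x, c * |φ x| ≤ 1) : c • φ ∈ LatticeDual L := by
  refine ⟨fun x ↦ ?_, fun x y ↦ ?_, fun x y ↦ ?_⟩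
  · simpa [abs_mul, abs_of_nonneg hc] using hbound x
  · simp [hφ.2.1 x y, mul_max_of_nonneg _ _ hc]
  · simp [hφ.2.2 x y, mul_min_of_nonneg _ _ hc]

theorem abs_apply_le_iSup_abs_of_mem_Cph {f : LatticeDual L → ℝ} (hf : f ∈ Cph L)
    (hf₁ : ∀ φ, |f φ| ≤ 1) (φ : LatticeDual L) : |f φ| ≤ ⨆ x, |(φ : L → ℝ) x| := by
  set M := ⨆ x, |(φ : L → ℝ) x|
  have hle : ∀ x, |(φ : L → ℝ) x| ≤ M := le_ciSup (bddAbove_range_abs_of_mem_latticeDual φ.2)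
  have hM₀ : 0 ≤ M := Real.iSup_nonneg fun x ↦ abs_nonneg _
  have hM₁ : M ≤ 1 := Real.iSup_le φ.2.1 zero_le_one
  let ψ : LatticeDual L := ⟨M⁻¹ • (φ : L → ℝ), smul_mem_latticeDual φ.2 (inv_nonneg.2 hM₀)
    fun x ↦ inv_mul_le_one_of_le₀ (hle x) hM₀⟩
  -- when `M = 0` the functional `φ` vanishes, so `φ = M • ψ` holds in that case too
  have hφψ : (φ : L → ℝ) = M • (ψ : L → ℝ) := by
    funext x
    rcases hM₀.eq_or_lt with hM | hM
    · simpa [← hM] using hle x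
    · simp [ψ, hM.ne']
  rw [hf.2 ψ φ M hM₀ hM₁ hφψ, abs_mul, abs_of_nonneg hM₀]
  exact mul_le_of_le_one_right hM₀ (hf₁ ψ)

theorem zero_mem_Cph : (0 : LatticeDual L → ℝ) ∈ Cph L :=
  ⟨continuous_const, fun _ _ _ _ _ _ ↦ by simp⟩

theorem exists_mem_Cph_apply_eq_iSup_abs {φ : L → ℝ} (hφ : φ ∈ LatticeDual L) :
    ∃ f ∈ Cph L, (∀ ψ, |f ψ| ≤ 1) ∧ f ⟨φ, hφ⟩ = ⨆ x, |φ x| := by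
  rcases (Real.iSup_nonneg fun x ↦ abs_nonneg (φ x)).eq_or_lt with hM | hM
  · exact ⟨0, zero_mem_Cph, fun _ ↦ by simp, by simp [← hM]⟩
  obtain ⟨z, hmono, hpos, hlim⟩ :=
    exists_seq_monotone_tendsto_iSup_of_pos (bddAbove_range_abs_of_mem_latticeDual hφ) hM
  set t : ℕ → ℝ := fun k ↦ |φ (z k)|
  have hφz : ∀ k, φ (z k) ≠ 0 := fun k ↦ abs_pos.1 (hpos.trans_le (hmono k.zero_le))
  set u : ℕ → LatticeDual L → ℝ := fun k ψ ↦ (ψ : L → ℝ) (z k) / φ (z k)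
  have hu : ∀ k, Continuous (u k) := fun k ↦
    ((continuous_apply (z k)).comp continuous_subtype_val).div_const _
  have htu : ∀ k ψ, |t k * u k ψ| = |(ψ : L → ℝ) (z k)| := fun k ψ ↦ by
    simp only [t, u, abs_mul, abs_div, abs_abs]
    exact mul_div_cancel₀ _ (abs_ne_zero.2 (hφz k))
  refine ⟨supScaledRunningInf t u, ⟨continuous_supScaledRunningInf hu hmono hpos hlim
      fun k ψ ↦ le_of_abs_le ((htu k ψ).trans_le (ψ.2.1 _)), ?_⟩, ?_, ?_⟩
  · intro ψ ψ' r hr₀ _ hψ'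
    exact supScaledRunningInf_of_forall_eq_mul hr₀ fun k ↦ by simp [u, hψ', mul_div_assoc]
  · exact abs_supScaledRunningInf_le_one (fun k ↦ abs_nonneg _)
      fun k ψ ↦ (htu k ψ).trans_le (ψ.2.1 _)
  · exact supScaledRunningInf_of_forall_eq_one hmono hlim fun k ↦ div_self (hφz k)

end LatticeDual

theorem evaluation_on_Cph_latticeDual_attains_norm_general
    {L : Type*} [Lattice L] (xs : L → ℝ) (hxs : xs ∈ LatticeDual L) :
    (∀ f ∈ Cph L, (∀ φ : LatticeDual L, |f φ| ≤ 1) →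
      |f ⟨xs, hxs⟩| ≤ max |sInf (Set.range xs)| |sSup (Set.range xs)|) ∧
    (∃ f ∈ Cph L, (∀ φ : LatticeDual L, |f φ| ≤ 1) ∧
      |f ⟨xs, hxs⟩| = max |sInf (Set.range xs)| |sSup (Set.range xs)|) := by
  rw [← iSup_abs_eq_max_abs_sInf_abs_sSup (bddAbove_range_abs_of_mem_latticeDual hxs)]
  refine ⟨fun f hf hf₁ ↦ abs_apply_le_iSup_abs_of_mem_Cph hf hf₁ _, ?_⟩
  obtain ⟨f, hf, hf₁, hfxs⟩ := exists_mem_Cph_apply_eq_iSup_abs hxs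
  refine ⟨f, hf, hf₁, ?_⟩
  rw [hfxs, abs_of_nonneg (Real.iSup_nonneg fun x ↦ abs_nonneg _)]

/-- every nonzero `x* ∈ 𝕃*`, viewed as the evaluation functional
`f ↦ f(x*)` on the AM-space `C_ph(𝕃*)` (with the sup norm), attains its norm, and its norm
equals `max {|inf x*|, |sup x*|}`. -/
theorem evaluation_on_Cph_latticeDual_attains_norm
    {L : Type*} [Lattice L] (xs : L → ℝ) (hxs : xs ∈ LatticeDual L)
    (hne : ∃ x : L, xs x ≠ 0) :
    (∀ f ∈ Cph L, (∀ φ : LatticeDual L, |f φ| ≤ 1) →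
      |f ⟨xs, hxs⟩| ≤ max |sInf (Set.range xs)| |sSup (Set.range xs)|) ∧
    (∃ f ∈ Cph L, (∀ φ : LatticeDual L, |f φ| ≤ 1) ∧
      |f ⟨xs, hxs⟩| = max |sInf (Set.range xs)| |sSup (Set.range xs)|) :=
  evaluation_on_Cph_latticeDual_attains_norm_general xs hxs
end
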